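/- With S₁ and S₂ defined as in the two curving methods (S₁ = bh/2 + β − sin β + (γ − sin γ)/2 and S₂ = (1/2 − ab/(a+b)²)(α − sin α), with h, α, β, γ as specified), for b = 5a and sufficiently small a > 0 one has S₁ > S₂. -/

import Mathlib

open Real

noncomputable def curveH (a b : ℝ) : ℝ :=
  Real.sqrt (1 - (a / 2) ^ 2) - Real.sqrt (1 - ((a + b) / 2) ^ 2)

noncomputable def curveS₁ (a b : ℝ) : ℝ :=
  b * curveH a b / 2
    + (Real.arccos (1 - ((b / 2) ^ 2 + (curveH a b) ^ 2) / 2)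
        - Real.sin (Real.arccos (1 - ((b / 2) ^ 2 + (curveH a b) ^ 2) / 2)))
    + (2 * Real.arcsin (a / 2) - Real.sin (2 * Real.arcsin (a / 2))) / 2

noncomputable def curveS₂ (a b : ℝ) : ℝ :=
  (1 / 2 - a * b / (a + b) ^ 2)
    * (2 * Real.arcsin ((a + b) / 2) - Real.sin (2 * Real.arcsin ((a + b) / 2)))


/-!
For small `a` both areas are of order `a³`, and the comparison is decided by the leading
coefficients. With `b = 5a` the factor in `S₂` is `13/36` and `α = 2 arcsin 3a ≤ 6a + 18a³`,
so `α - sin α ≤ α³/6` gives `S₂ ≤ 13a³(1 + 3a²)³`. On the other side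
`h ≥ ((a + b)² - a²)/8 = 35a²/8`, so `bh/2 ≥ 175a³/16`; since `1 - ((b/2)² + h²)/2 ≤ cos (b/2)`,
also `β ≥ b/2` and `β - sin β ≥ 125a³/48 - O(a⁵)`, while the `γ`-term is nonnegative.
Hence `S₁ ≥ (325/24)a³ - O(a⁵)`, which beats `13a³`.
-/

namespace Real

theorem monotone_id_sub_sin : Monotone fun x : ℝ => x - sin x := by
  have hderiv (x : ℝ) : HasDerivAt (fun x : ℝ => x - sin x) (1 - cos x) x :=
    (hasDerivAt_id x).sub (hasDerivAt_sin x)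
  refine monotone_of_deriv_nonneg (fun x => (hderiv x).differentiableAt) fun x => ?_
  rw [(hderiv x).deriv]
  linarith [cos_le_one x]

theorem sub_sin_le_cube_div_six {x : ℝ} (hx : 0 ≤ x) : x - sin x ≤ x ^ 3 / 6 := by
  linarith [sin_ge_sub_cube hx]

theorem cube_div_six_sub_le_sub_sin {x : ℝ} (hx₀ : 0 ≤ x) (hx₁ : x ≤ 1) :
    x ^ 3 / 6 - x ^ 5 / 100 ≤ x - sin x := by
  have h := sin_bound (x := x) (by rwa [abs_of_nonneg hx₀])
  rw [abs_of_nonneg hx₀] at h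
  linarith [(abs_le.mp h).2]

theorem le_arccos_one_sub_sq_add_sq_div_two {c : ℝ} (hc₀ : 0 ≤ c) (hcπ : c ≤ π) (d : ℝ) :
    c ≤ arccos (1 - (c ^ 2 + d ^ 2) / 2) := by
  have hcos : 1 - (c ^ 2 + d ^ 2) / 2 ≤ cos c := by
    nlinarith [one_sub_sq_div_two_le_cos (x := c), sq_nonneg d]
  calc c = arccos (cos c) := (arccos_cos hc₀ hcπ).symm
    _ ≤ arccos (1 - (c ^ 2 + d ^ 2) / 2) := antitone_arccos hcos

theorem arcsin_le_add_cube_div_three {y : ℝ} (hy₀ : 0 ≤ y) (hy₁ : y ≤ 1 / 2) :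
    arcsin y ≤ y + y ^ 3 / 3 := by
  have hy₂ : y ^ 2 ≤ 1 / 4 := by nlinarith
  have hz : (y + y ^ 3 / 3) ^ 3 ≤ 2 * y ^ 3 := by
    have : (1 + y ^ 2 / 3) ^ 3 ≤ 2 :=
      calc (1 + y ^ 2 / 3) ^ 3 ≤ (1 + 1 / 4 / 3) ^ 3 := by gcongr
        _ ≤ 2 := by norm_num
    calc (y + y ^ 3 / 3) ^ 3 = y ^ 3 * (1 + y ^ 2 / 3) ^ 3 := by ring
      _ ≤ y ^ 3 * 2 := by gcongr
      _ = 2 * y ^ 3 := by ring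
  have hz₀ : 0 ≤ y + y ^ 3 / 3 := by positivity
  have hsin : y ≤ sin (y + y ^ 3 / 3) := by linarith [sin_ge_sub_cube hz₀]
  have hπ : y + y ^ 3 / 3 ≤ π / 2 := by nlinarith [pi_gt_three]
  calc arcsin y ≤ arcsin (sin (y + y ^ 3 / 3)) := monotone_arcsin hsin
    _ = y + y ^ 3 / 3 := arcsin_sin (by linarith [pi_pos]) hπ

theorem sq_sub_sq_div_two_le_sqrt_one_sub_sq_sub_sqrt {x y : ℝ} (hxy : x ^ 2 ≤ y ^ 2)
    (hy : y ^ 2 ≤ 1) : (y ^ 2 - x ^ 2) / 2 ≤ √(1 - x ^ 2) - √(1 - y ^ 2) := by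
  have hu := sq_sqrt (show 0 ≤ 1 - x ^ 2 by linarith)
  have hv := sq_sqrt (show 0 ≤ 1 - y ^ 2 by linarith)
  have hu₁ : √(1 - x ^ 2) ≤ 1 := sqrt_le_one.mpr (by linarith [sq_nonneg x])
  have hvu : √(1 - y ^ 2) ≤ √(1 - x ^ 2) := sqrt_le_sqrt (by linarith)
  -- with `u = √(1 - x²)`, `v = √(1 - y²)`: `(u - v) (u + v) = y² - x²` and `u + v ≤ 2`
  nlinarith [sqrt_nonneg (1 - y ^ 2)]

end Real

theorem curveH_ge {a b : ℝ} (ha : 0 ≤ a) (hb : 0 ≤ b) (hab : a + b ≤ 2) :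
    ((a + b) ^ 2 - a ^ 2) / 8 ≤ curveH a b := by
  have := sq_sub_sq_div_two_le_sqrt_one_sub_sq_sub_sqrt (x := a / 2) (y := (a + b) / 2)
    (by gcongr; linarith) (by rw [div_pow]; nlinarith)
  unfold curveH
  linarith

theorem curveS₁_ge {a b : ℝ} (ha : 0 ≤ a) (hb₀ : 0 ≤ b) (hbπ : b / 2 ≤ π) :
    b * curveH a b / 2 + (b / 2 - sin (b / 2)) ≤ curveS₁ a b := by
  have hβ := monotone_id_sub_sin
    (le_arccos_one_sub_sq_add_sq_div_two (by positivity) hbπ (curveH a b))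
  have hγ : sin (2 * arcsin (a / 2)) ≤ 2 * arcsin (a / 2) :=
    sin_le (by linarith [arcsin_nonneg.mpr (by positivity : 0 ≤ a / 2)])
  unfold curveS₁
  dsimp only at hβ
  linarith

theorem curveS₁_five_mul_ge {a : ℝ} (ha₀ : 0 ≤ a) (ha₁ : a ≤ 1 / 3) :
    a ^ 3 * (325 / 24 - 125 / 128 * a ^ 2) ≤ curveS₁ a (5 * a) := by
  have hS₁ := curveS₁_ge ha₀ (by positivity : 0 ≤ 5 * a) (by linarith [pi_gt_three])
  have hh := mul_le_mul_of_nonneg_left (curveH_ge ha₀ (by positivity : 0 ≤ 5 * a) (by linarith))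
    (by positivity : 0 ≤ 5 * a / 2)
  have hβ := cube_div_six_sub_le_sub_sin (x := 5 * a / 2) (by positivity) (by linarith)
  linarith

theorem curveS₂_five_mul_le {a : ℝ} (ha₀ : 0 < a) (ha₁ : a ≤ 1 / 6) :
    curveS₂ a (5 * a) ≤ 13 * a ^ 3 * (1 + 3 * a ^ 2) ^ 3 := by
  set α := 2 * arcsin (3 * a)
  have hα₀ : 0 ≤ α := by linarith [arcsin_nonneg.mpr (by positivity : 0 ≤ 3 * a)]
  have hα : α ≤ 6 * a + 18 * a ^ 3 := by
    linarith [arcsin_le_add_cube_div_three (y := 3 * a) (by positivity) (by linarith)]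
  have hcoef : (1 / 2 - a * (5 * a) / (a + 5 * a) ^ 2 : ℝ) = 13 / 36 := by
    field_simp
    ring
  calc curveS₂ a (5 * a) = 13 / 36 * (α - sin α) := by
        rw [curveS₂, hcoef, show (a + 5 * a) / 2 = 3 * a by ring]
    _ ≤ 13 / 36 * (α ^ 3 / 6) := by gcongr; exact sub_sin_le_cube_div_six hα₀
    _ ≤ 13 / 36 * ((6 * a + 18 * a ^ 3) ^ 3 / 6) := by gcongr
    _ = 13 * a ^ 3 * (1 + 3 * a ^ 2) ^ 3 := by ring

theorem curving_radius_one_better_for_b_eq_5a :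
    ∃ ε > (0 : ℝ), ∀ a : ℝ, 0 < a → a < ε → curveS₁ a (5 * a) > curveS₂ a (5 * a) := by
  refine ⟨1 / 100, by norm_num, fun a ha haε => ?_⟩
  have ha₂ : a ^ 2 ≤ 1 / 10000 := by nlinarith
  have hcoef : 13 * (1 + 3 * a ^ 2) ^ 3 < 325 / 24 - 125 / 128 * a ^ 2 :=
    calc 13 * (1 + 3 * a ^ 2) ^ 3 ≤ 13 * (1 + 3 / 10000) ^ 3 := by gcongr; linarith
      _ < 325 / 24 - 125 / 128 / 10000 := by norm_num
      _ ≤ 325 / 24 - 125 / 128 * a ^ 2 := by linarith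
  calc curveS₂ a (5 * a) ≤ 13 * a ^ 3 * (1 + 3 * a ^ 2) ^ 3 := curveS₂_five_mul_le ha (by linarith)
    _ = a ^ 3 * (13 * (1 + 3 * a ^ 2) ^ 3) := by ring
    _ < a ^ 3 * (325 / 24 - 125 / 128 * a ^ 2) := by gcongr
    _ ≤ curveS₁ a (5 * a) := curveS₁_five_mul_ge ha.le (by linarith)
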